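/- arXiv:2311.05338 — 8 statements merged into one kernel-verified Lean document; each statement's English description precedes it below -/
import Mathlib

section
/- Let R be a ring, M a right R-module, and X, Y countably generated modules in Add(M) (direct summands of direct sums of copies of M). Then the ideal of the category Add(M) consisting of morphisms factoring through arbitrary direct sums of copies of X equals the corresponding ideal for Y if and only if X^(ω) ≅ Y^(ω), where X^(ω) denotes the countable direct sum of copies of X. -/
/-!
The identity of `X` factors through `X`, so if `𝒥_X = 𝒥_Y` then `X` is a direct summand of some
`Y^(Λ)`; as `X` is countably generated its image lies in a countable subsum, so `X` is a summand of
`Y^(ω)`, and symmetrically. Then `X^(ω)` and `Y^(ω)` are summands of each other and both absorb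
countable sums, so the Eilenberg swindle `Y^(ω) ≅ X^(ω) ⊕ Y^(ω) ≅ X^(ω)` applies. Conversely, if
`X^(ω) ≅ Y^(ω)` then `X` is a summand of `Y^(ω)`, and a map through `X^(Λ)` factors through
`Y^(Λ × ω)`.
-/

universe u v

/-- `X` is in `Add M`: `X` is (isomorphic to) a direct summand of a direct sum of
copies of `M`. -/
def InAdd (R : Type u) [Ring R] (M : Type v) [AddCommGroup M] [Module R M]
    (X : Type v) [AddCommGroup X] [Module R X] : Prop :=
  ∃ (Λ : Type v) (ι : X →ₗ[R] (Λ →₀ M)) (π : (Λ →₀ M) →ₗ[R] X), π ∘ₗ ι = LinearMap.id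

/-- `X` is countably generated as an `R`-module. -/
def CountablyGeneratedModule (R : Type u) [Ring R] (X : Type v) [AddCommGroup X]
    [Module R X] : Prop :=
  ∃ s : Set X, s.Countable ∧ Submodule.span R s = ⊤

/-- `f` factors through a direct sum of copies of `X` (membership in the ideal `𝒥_X`). -/
def FactorsThroughCopies (R : Type u) [Ring R] (X : Type v) [AddCommGroup X] [Module R X]
    {A B : Type v} [AddCommGroup A] [Module R A] [AddCommGroup B] [Module R B]
    (f : A →ₗ[R] B) : Prop :=
  ∃ (Λ : Type v) (g : A →ₗ[R] (Λ →₀ X)) (h : (Λ →₀ X) →ₗ[R] B), h ∘ₗ g = f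

open Function

def IsDirectSummand (R : Type u) [Ring R] (A B : Type*) [AddCommGroup A] [Module R A]
    [AddCommGroup B] [Module R B] : Prop :=
  ∃ (i : A →ₗ[R] B) (p : B →ₗ[R] A), p ∘ₗ i = LinearMap.id

variable {R : Type u} [Ring R]

section LinearEquiv

variable {ι : Type*} {A B : Type*} [AddCommGroup A] [Module R A] [AddCommGroup B] [Module R B]

noncomputable def LinearEquiv.prodKerOfLeftInverse (i : A →ₗ[R] B) (p : B →ₗ[R] A)
    (hpi : p ∘ₗ i = LinearMap.id) : B ≃ₗ[R] A × LinearMap.ker p := by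
  have hpi' (a : A) : p (i a) = a := LinearMap.congr_fun hpi a
  refine LinearEquiv.ofLinearMap
    (p.prod ((LinearMap.id - i ∘ₗ p).codRestrict (LinearMap.ker p) fun b => by simp [hpi']))
    (i.coprod (LinearMap.ker p).subtype) ?_ ?_
  · ext <;> simp [hpi']
  · ext; simp

noncomputable def Finsupp.prodLEquiv : (ι →₀ A × B) ≃ₗ[R] (ι →₀ A) × (ι →₀ B) :=
  LinearEquiv.ofLinearMap
    ((Finsupp.mapRange.linearMap (LinearMap.fst R A B)).prod
      (Finsupp.mapRange.linearMap (LinearMap.snd R A B)))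
    ((Finsupp.mapRange.linearMap (LinearMap.inl R A B)).coprod
      (Finsupp.mapRange.linearMap (LinearMap.inr R A B)))
    (by ext <;> simp) (by ext <;> simp)

noncomputable def Finsupp.natLEquivProd : (ℕ →₀ A) ≃ₗ[R] A × (ℕ →₀ A) :=
  Finsupp.domLCongr Equiv.natSumPUnitEquivNat.{0}.symm ≪≫ₗ
    Finsupp.sumFinsuppLEquivProdFinsupp R ≪≫ₗ LinearEquiv.prodComm R _ _ ≪≫ₗ
    (Finsupp.uniqueLinearEquiv R A PUnit.unit).prodCongr (LinearEquiv.refl R _)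

noncomputable def Finsupp.natNatLEquiv : (ℕ →₀ ℕ →₀ A) ≃ₗ[R] (ℕ →₀ A) :=
  (Finsupp.curryLinearEquiv R).symm ≪≫ₗ Finsupp.domLCongr Nat.pairEquiv

end LinearEquiv

namespace IsDirectSummand

variable {A B C : Type*} [AddCommGroup A] [Module R A] [AddCommGroup B] [Module R B]
  [AddCommGroup C] [Module R C]

theorem trans (hAB : IsDirectSummand R A B) (hBC : IsDirectSummand R B C) :
    IsDirectSummand R A C := by
  obtain ⟨i, p, hpi⟩ := hAB
  obtain ⟨j, q, hqj⟩ := hBC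
  refine ⟨j ∘ₗ i, p ∘ₗ q, ?_⟩
  rw [LinearMap.comp_assoc, ← LinearMap.comp_assoc i, hqj, LinearMap.id_comp, hpi]

theorem of_linearEquiv (e : A ≃ₗ[R] B) : IsDirectSummand R A B :=
  ⟨e, e.symm, by ext; simp⟩

theorem finsupp (ι : Type*) (h : IsDirectSummand R A B) :
    IsDirectSummand R (ι →₀ A) (ι →₀ B) := by
  obtain ⟨i, p, hpi⟩ := h
  refine ⟨Finsupp.mapRange.linearMap i, Finsupp.mapRange.linearMap p, ?_⟩
  rw [← Finsupp.mapRange.linearMap_comp, hpi, Finsupp.mapRange.linearMap_id]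

theorem self_finsupp {ι : Type*} (a : ι) : IsDirectSummand R A (ι →₀ A) :=
  ⟨Finsupp.lsingle a, Finsupp.lapply a, Finsupp.lapply_comp_lsingle_same a⟩

theorem finsupp_of_injective {α β : Type*} {f : α → β} (hf : Injective f) :
    IsDirectSummand R (α →₀ A) (β →₀ A) :=
  ⟨Finsupp.lmapDomain A R f, Finsupp.lcomapDomain f hf, by ext; simp⟩

theorem codRestrict {N : Submodule R B} {i : A →ₗ[R] B} {p : B →ₗ[R] A}
    (hpi : p ∘ₗ i = LinearMap.id) (hi : ∀ a, i a ∈ N) : IsDirectSummand R A N :=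
  ⟨i.codRestrict N hi, p ∘ₗ N.subtype, by
    rwa [LinearMap.comp_assoc, LinearMap.subtype_comp_codRestrict]⟩

theorem exists_linearEquiv_prod (h : IsDirectSummand R A B) :
    ∃ C : Submodule R B, Nonempty (B ≃ₗ[R] A × C) :=
  let ⟨i, p, hpi⟩ := h
  ⟨_, ⟨LinearEquiv.prodKerOfLeftInverse i p hpi⟩⟩

/-- Eilenberg swindle: `B ≅ B^(ω) ≅ A^(ω) × C^(ω) ≅ A × A^(ω) × C^(ω) ≅ A × B^(ω) ≅ A × B`
for a complement `C` of `A` in `B`. -/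
theorem nonempty_linearEquiv_prod (h : IsDirectSummand R A B) (eB : (ℕ →₀ B) ≃ₗ[R] B) :
    Nonempty (B ≃ₗ[R] A × B) := by
  obtain ⟨C, ⟨e⟩⟩ := h.exists_linearEquiv_prod
  exact ⟨eB.symm ≪≫ₗ Finsupp.mapRange.linearEquiv e ≪≫ₗ Finsupp.prodLEquiv ≪≫ₗ
    Finsupp.natLEquivProd.prodCongr (LinearEquiv.refl R _) ≪≫ₗ LinearEquiv.prodAssoc R _ _ _ ≪≫ₗ
    (LinearEquiv.refl R A).prodCongr
      (Finsupp.prodLEquiv.symm ≪≫ₗ Finsupp.mapRange.linearEquiv e.symm ≪≫ₗ eB)⟩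

theorem finsupp_nat {X Y : Type*} [AddCommGroup X] [Module R X] [AddCommGroup Y] [Module R Y]
    (h : IsDirectSummand R X (ℕ →₀ Y)) : IsDirectSummand R (ℕ →₀ X) (ℕ →₀ Y) :=
  (h.finsupp ℕ).trans (of_linearEquiv Finsupp.natNatLEquiv)

theorem nonempty_linearEquiv_finsupp_nat {X Y : Type*} [AddCommGroup X] [Module R X]
    [AddCommGroup Y] [Module R Y] (hXY : IsDirectSummand R X (ℕ →₀ Y))
    (hYX : IsDirectSummand R Y (ℕ →₀ X)) : Nonempty ((ℕ →₀ X) ≃ₗ[R] (ℕ →₀ Y)) := by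
  obtain ⟨eY⟩ := hXY.finsupp_nat.nonempty_linearEquiv_prod Finsupp.natNatLEquiv
  obtain ⟨eX⟩ := hYX.finsupp_nat.nonempty_linearEquiv_prod Finsupp.natNatLEquiv
  exact ⟨eX ≪≫ₗ LinearEquiv.prodComm R _ _ ≪≫ₗ eY.symm⟩

end IsDirectSummand

section CountablyGenerated

variable {X Y Λ : Type*} [AddCommGroup X] [Module R X] [AddCommGroup Y] [Module R Y]

theorem CountablyGeneratedModule.exists_countable_supported (hX : CountablyGeneratedModule R X)
    (g : X →ₗ[R] Λ →₀ Y) : ∃ S : Set Λ, S.Countable ∧ ∀ x, g x ∈ Finsupp.supported Y R S := by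
  obtain ⟨s, hs, hspan⟩ := hX
  refine ⟨⋃ x ∈ s, ((g x).support : Set Λ),
    hs.biUnion fun x _ => (g x).support.countable_toSet, fun x => ?_⟩
  have hle : Submodule.span R s ≤ (Finsupp.supported Y R _).comap g :=
    Submodule.span_le.2 fun a ha => (Finsupp.mem_supported R _).2 <|
      Set.subset_biUnion_of_mem (u := fun x => ((g x).support : Set Λ)) ha
  exact hle (hspan ▸ Submodule.mem_top)

theorem IsDirectSummand.finsupp_nat_of_countablyGenerated (hX : CountablyGeneratedModule R X)
    (h : IsDirectSummand R X (Λ →₀ Y)) : IsDirectSummand R X (ℕ →₀ Y) := by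
  obtain ⟨i, p, hpi⟩ := h
  obtain ⟨S, hS, hiS⟩ := hX.exists_countable_supported i
  have : Countable S := hS.to_subtype
  obtain ⟨f, hf⟩ := Countable.exists_injective_nat S
  exact (codRestrict hpi hiS).trans <|
    (of_linearEquiv (Finsupp.supportedEquivFinsupp S)).trans (finsupp_of_injective hf)

end CountablyGenerated

section FactorsThroughCopies

variable {X Y A B : Type v} [AddCommGroup X] [Module R X] [AddCommGroup Y] [Module R Y]
  [AddCommGroup A] [Module R A] [AddCommGroup B] [Module R B]

theorem FactorsThroughCopies.comp_of_isDirectSummand {P Λ : Type v} [AddCommGroup P] [Module R P]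
    (hP : IsDirectSummand R P (Λ →₀ X)) (g : A →ₗ[R] P) (h : P →ₗ[R] B) :
    FactorsThroughCopies R X (h ∘ₗ g) := by
  obtain ⟨i, p, hpi⟩ := hP
  refine ⟨Λ, i ∘ₗ g, h ∘ₗ p, ?_⟩
  rw [LinearMap.comp_assoc, ← LinearMap.comp_assoc g, hpi, LinearMap.id_comp]

theorem FactorsThroughCopies.id : FactorsThroughCopies R X (LinearMap.id : X →ₗ[R] X) :=
  comp_of_isDirectSummand (Λ := PUnit)
    (.of_linearEquiv (Finsupp.uniqueLinearEquiv R X PUnit.unit).symm) .id .id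

theorem FactorsThroughCopies.of_isDirectSummand_finsupp_nat (hXY : IsDirectSummand R X (ℕ →₀ Y))
    {f : A →ₗ[R] B} (hf : FactorsThroughCopies R X f) : FactorsThroughCopies R Y f := by
  obtain ⟨Λ, g, h, rfl⟩ := hf
  exact comp_of_isDirectSummand
    ((hXY.finsupp Λ).trans (.of_linearEquiv (Finsupp.curryLinearEquiv R).symm)) g h

theorem IsDirectSummand.finsupp_nat_of_factorsThroughCopies_id
    (hX : CountablyGeneratedModule R X) (h : FactorsThroughCopies R Y (LinearMap.id : X →ₗ[R] X)) :
    IsDirectSummand R X (ℕ →₀ Y) :=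
  let ⟨_, i, p, hpi⟩ := h
  finsupp_nat_of_countablyGenerated hX ⟨i, p, hpi⟩

end FactorsThroughCopies

/-- For countably generated `X, Y ∈ Add(M)`, the ideals `𝒥_X` and `𝒥_Y` of `Add(M)`
coincide iff `X^(ω) ≅ Y^(ω)`. -/
theorem stmt0 (R : Type u) [Ring R] (M : Type v) [AddCommGroup M] [Module R M]
    (X Y : Type v) [AddCommGroup X] [Module R X] [AddCommGroup Y] [Module R Y]
    (hX : InAdd R M X) (hY : InAdd R M Y)
    (hXc : CountablyGeneratedModule R X) (hYc : CountablyGeneratedModule R Y) :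
    (∀ (A B : Type v) [AddCommGroup A] [Module R A] [AddCommGroup B] [Module R B],
        InAdd R M A → InAdd R M B → ∀ f : A →ₗ[R] B,
          (FactorsThroughCopies R X f ↔ FactorsThroughCopies R Y f)) ↔
      Nonempty ((ℕ →₀ X) ≃ₗ[R] (ℕ →₀ Y)) := by
  constructor
  · intro hJ
    have hXY := IsDirectSummand.finsupp_nat_of_factorsThroughCopies_id hXc
      ((hJ X X hX hX .id).1 .id)
    have hYX := IsDirectSummand.finsupp_nat_of_factorsThroughCopies_id hYc
      ((hJ Y Y hY hY .id).2 .id)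
    exact hXY.nonempty_linearEquiv_finsupp_nat hYX
  · rintro ⟨e⟩ A B _ _ _ _ _ _ f
    have hXY := (IsDirectSummand.self_finsupp 0).trans (.of_linearEquiv e)
    have hYX := (IsDirectSummand.self_finsupp 0).trans (.of_linearEquiv e.symm)
    exact ⟨.of_isDirectSummand_finsupp_nat hXY, .of_isDirectSummand_finsupp_nat hYX⟩
end

section
/- Let S be a ring, P a projective right S-module, and I a two-sided ideal of S. Then Tr_S(P) ⊆ I if and only if PI = P. -/
universe u

/-- The trace ideal of a module: the sum of the images of all linear maps to the ring. -/
def traceIdeal (S : Type u) [Ring S] (P : Type u) [AddCommGroup P] [Module S P] :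
    Ideal S :=
  ⨆ f : P →ₗ[S] S, LinearMap.range f

/-- For a projective module `P` and a two-sided ideal `I` of `S`:
`Tr_S(P) ⊆ I` iff `IP = P`. -/
theorem stmt3 (S : Type u) [Ring S] (P : Type u) [AddCommGroup P] [Module S P]
    [Module.Projective S P] (I : Ideal S) (hI : ∀ a ∈ I, ∀ s : S, a * s ∈ I) :
    traceIdeal S P ≤ I ↔
      Submodule.span S {x : P | ∃ a ∈ I, ∃ m : P, x = a • m} = ⊤ := by
  constructor
  · intro h
    rw [Submodule.eq_top_iff']
    intro p
    obtain ⟨s, hs⟩ := Module.projective_def'.mp ‹Module.Projective S P›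
    have hp : (Finsupp.linearCombination S (id : P → P)) (s p) = p := LinearMap.congr_fun hs p
    rw [← hp, Finsupp.linearCombination_apply, Finsupp.sum]
    apply Submodule.sum_mem
    intro x _
    apply Submodule.subset_span
    refine ⟨(s p) x, ?_, x, by simp⟩
    apply h
    have hmem : (s p) x ∈ LinearMap.range ((Finsupp.lapply x).comp s) := ⟨p, rfl⟩
    exact le_iSup (fun f : P →ₗ[S] S => LinearMap.range f) _ hmem
  · intro h
    apply iSup_le
    rintro f a ⟨p, rfl⟩
    have hp : p ∈ Submodule.span S {x : P | ∃ a ∈ I, ∃ m : P, x = a • m} := by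
      rw [h]; trivial
    induction hp using Submodule.span_induction with
    | mem x hx =>
      obtain ⟨a, ha, m, rfl⟩ := hx
      simpa [mul_comm] using hI a ha (f m)
    | zero => simp
    | add x y _ _ hx hy => simpa using I.add_mem hx hy
    | smul s x _ hx => simpa using I.mul_mem_left s hx
end

section
/- Let S be a ring and let I, J be idempotent two-sided ideals of S. If I and J are isomorphic as right S-modules, then I = J. -/
universe u

open scoped Pointwise

private lemma aux6 {S : Type u} [Ring S] (I J : Ideal S)
    (hI2 : ∀ a ∈ I, ∀ s : S, a * s ∈ I)
    (hIi : Submodule.span S ((I : Set S) * (I : Set S)) = I)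
    (f : ↥I ≃ₗ[S] ↥J) : J ≤ I := by
  have key : ∀ x, x ∈ Submodule.span S ((I : Set S) * (I : Set S)) →
      ∀ hx : x ∈ I, ((f ⟨x, hx⟩ : ↥J) : S) ∈ I := by
    intro x hx
    induction hx using Submodule.span_induction with
    | mem x hx =>
      obtain ⟨a, ha, b, hb, rfl⟩ := Set.mem_mul.mp hx
      intro hab
      have : (⟨a * b, hab⟩ : ↥I) = a • (⟨b, hb⟩ : ↥I) := by
        ext; simp
      rw [this, map_smul]
      simpa [smul_eq_mul] using hI2 a ha ((f ⟨b, hb⟩ : ↥J) : S)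
    | zero =>
      intro h0
      have : (⟨(0:S), h0⟩ : ↥I) = 0 := rfl
      rw [this, map_zero]; exact I.zero_mem
    | add x y hx hy ihx ihy =>
      intro hxy
      have hx' : x ∈ I := hIi ▸ hx
      have hy' : y ∈ I := hIi ▸ hy
      have : (⟨x + y, hxy⟩ : ↥I) = ⟨x, hx'⟩ + ⟨y, hy'⟩ := rfl
      rw [this, map_add]
      exact I.add_mem (ihx hx') (ihy hy')
    | smul s x hx ihx =>
      intro hsx
      have hx' : x ∈ I := hIi ▸ hx
      have : (⟨s • x, hsx⟩ : ↥I) = s • ⟨x, hx'⟩ := rfl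
      rw [this, map_smul]
      simpa using I.smul_mem s (ihx hx')
  intro y hy
  have hx : (f.symm ⟨y, hy⟩ : S) ∈ I := Submodule.coe_mem _
  have := key _ (by rw [hIi]; exact hx) hx
  simpa using this

/-- Idempotent two-sided ideals that are isomorphic as `S`-modules are equal. -/
theorem stmt6 (S : Type u) [Ring S] (I J : Ideal S)
    (hI2 : ∀ a ∈ I, ∀ s : S, a * s ∈ I) (hJ2 : ∀ a ∈ J, ∀ s : S, a * s ∈ J)
    (hIi : Submodule.span S ((I : Set S) * (I : Set S)) = I)
    (hJi : Submodule.span S ((J : Set S) * (J : Set S)) = J)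
    (h : Nonempty (↥I ≃ₗ[S] ↥J)) : I = J := by
  obtain ⟨f⟩ := h
  exact le_antisymm (aux6 J I hJ2 hJi f.symm) (aux6 I J hI2 hIi f)
end

section
/- Let R be a commutative local noetherian ring with maximal ideal 𝔪 and 𝔪-adic completion R̂. Let M and N be finitely generated R-modules and let h : M ⊗_R R̂ → N ⊗_R R̂ be an R̂-linear map. Then there exists an R-linear map f : M → N such that the image of h − (f ⊗ 1) is contained in (N ⊗_R R̂)·𝔪̂, where 𝔪̂ is the maximal ideal of R̂. -/
/-!
The completion `R̂` is flat over the noetherian ring `R` and `M` is finitely presented, so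
`Hom_{R̂}(R̂ ⊗ M, R̂ ⊗ N)` is the base change `R̂ ⊗ Hom_R(M, N)`: every `h` is an `R̂`-linear
combination of maps `f ⊗ 1`. Since `R → R̂ / 𝔪R̂ = R / 𝔪` is surjective, each coefficient is
congruent modulo `𝔪R̂` to an element of `R`, and replacing the coefficients by these elements
gives the required `f`.
-/

universe u

open scoped TensorProduct

theorem AdicCompletion.exists_sub_algebraMap_mem_map {R : Type*} [CommRing R] {I : Ideal R}
    (hI : I.FG) (a : AdicCompletion I R) :
    ∃ r : R,
      a - algebraMap R (AdicCompletion I R) r ∈ I.map (algebraMap R (AdicCompletion I R)) := by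
  obtain ⟨r, hr⟩ := Ideal.Quotient.mk_surjective (evalOneₐ I a)
  refine ⟨r, ?_⟩
  rw [← ker_evalOneₐ_eq_map (I := I) hI, RingHom.mem_ker]
  simp [hr]

section BaseChange

variable {R S : Type*} [CommSemiring R] [CommRing S] [Algebra R S]
  {M N : Type*} [AddCommMonoid M] [Module R M] [AddCommMonoid N] [Module R N] [Module S N]
  [IsScalarTower R S N]

theorem IsBaseChange.exists_add_mem_smul_top {g : M →ₗ[R] N} (hg : IsBaseChange S g)
    {J : Ideal S} (hJ : ∀ s : S, ∃ r : R, s - algebraMap R S r ∈ J) (y : N) :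
    ∃ x : M, ∃ z ∈ J • (⊤ : Submodule S N), g x + z = y := by
  induction y using hg.inductionOn with
  | zero => exact ⟨0, 0, Submodule.zero_mem _, by simp⟩
  | tmul x => exact ⟨x, 0, Submodule.zero_mem _, by simp⟩
  | smul s y ih =>
    obtain ⟨x, z, hz, rfl⟩ := ih
    obtain ⟨r, hr⟩ := hJ s
    refine ⟨r • x, algebraMap R S r • z + (s - algebraMap R S r) • (g x + z),
      Submodule.add_mem _ (Submodule.smul_mem _ _ hz) (Submodule.smul_mem_smul hr trivial), ?_⟩
    rw [map_smul, ← algebraMap_smul S r (g x), ← add_assoc, ← smul_add, ← add_smul,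
      add_sub_cancel]
  | add y₁ y₂ ih₁ ih₂ =>
    obtain ⟨x₁, z₁, hz₁, rfl⟩ := ih₁
    obtain ⟨x₂, z₂, hz₂, rfl⟩ := ih₂
    exact ⟨x₁ + x₂, z₁ + z₂, Submodule.add_mem _ hz₁ hz₂, by rw [map_add, add_add_add_comm]⟩

end BaseChange

theorem LinearMap.range_le_smul_top_of_mem_smul_top {S P Q : Type*} [CommSemiring S]
    [AddCommMonoid P] [Module S P] [AddCommMonoid Q] [Module S Q] {J : Ideal S} {φ : P →ₗ[S] Q}
    (hφ : φ ∈ J • (⊤ : Submodule S (P →ₗ[S] Q))) :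
    LinearMap.range φ ≤ J • (⊤ : Submodule S Q) := by
  refine Submodule.smul_induction_on hφ ?_ ?_
  · rintro j hj ψ - _ ⟨x, rfl⟩
    exact Submodule.smul_mem_smul hj trivial
  · rintro φ₁ φ₂ h₁ h₂ _ ⟨x, rfl⟩
    exact Submodule.add_mem _ (h₁ ⟨x, rfl⟩) (h₂ ⟨x, rfl⟩)

theorem stmt11_general (R : Type u) [CommRing R] [IsLocalRing R] [IsNoetherianRing R]
    (M N : Type u) [AddCommGroup M] [Module R M] [Module.Finite R M]
    [AddCommGroup N] [Module R N]
    (h : AdicCompletion (IsLocalRing.maximalIdeal R) R ⊗[R] M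
        →ₗ[AdicCompletion (IsLocalRing.maximalIdeal R) R]
          AdicCompletion (IsLocalRing.maximalIdeal R) R ⊗[R] N) :
    ∃ f : M →ₗ[R] N,
      LinearMap.range
          (h - LinearMap.baseChange (AdicCompletion (IsLocalRing.maximalIdeal R) R) f) ≤
        (Ideal.map (algebraMap R (AdicCompletion (IsLocalRing.maximalIdeal R) R))
            (IsLocalRing.maximalIdeal R)) •
          (⊤ : Submodule (AdicCompletion (IsLocalRing.maximalIdeal R) R)
            (AdicCompletion (IsLocalRing.maximalIdeal R) R ⊗[R] N)) := by
  have := Module.finitePresentation_of_finite R M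
  have hbc := Module.FinitePresentation.isBaseChange_map R M N
    (AdicCompletion (IsLocalRing.maximalIdeal R) R)
  have hJ := AdicCompletion.exists_sub_algebraMap_mem_map
    (IsNoetherian.noetherian (IsLocalRing.maximalIdeal R))
  obtain ⟨f, φ, hφ, hfφ⟩ := hbc.exists_add_mem_smul_top hJ h
  have hdiff : h - f.baseChange _ = φ := by
    rw [← hfφ, LinearMap.baseChangeHom_apply, add_sub_cancel_left]
  exact ⟨f, hdiff ▸ LinearMap.range_le_smul_top_of_mem_smul_top hφ⟩

/-- Any `R̂`-linear map `M ⊗ R̂ → N ⊗ R̂` between completions of finitely generated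
modules agrees, modulo the maximal ideal of `R̂`, with a map extended from `R`. -/
theorem stmt11 (R : Type u) [CommRing R] [IsLocalRing R] [IsNoetherianRing R]
    (M N : Type u) [AddCommGroup M] [Module R M] [Module.Finite R M]
    [AddCommGroup N] [Module R N] [Module.Finite R N]
    (h : AdicCompletion (IsLocalRing.maximalIdeal R) R ⊗[R] M
        →ₗ[AdicCompletion (IsLocalRing.maximalIdeal R) R]
          AdicCompletion (IsLocalRing.maximalIdeal R) R ⊗[R] N) :
    ∃ f : M →ₗ[R] N,
      LinearMap.range
          (h - LinearMap.baseChange (AdicCompletion (IsLocalRing.maximalIdeal R) R) f) ≤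
        (Ideal.map (algebraMap R (AdicCompletion (IsLocalRing.maximalIdeal R) R))
            (IsLocalRing.maximalIdeal R)) •
          (⊤ : Submodule (AdicCompletion (IsLocalRing.maximalIdeal R) R)
            (AdicCompletion (IsLocalRing.maximalIdeal R) R ⊗[R] N)) :=
  stmt11_general R M N h
end

section
/- Let R be a commutative local noetherian ring with maximal ideal 𝔪 and completion R̂, and let S be a module-finite R-algebra. If I and J are idempotent two-sided ideals of S with I ⊗_R R̂ ≅ J ⊗_R R̂ as right S ⊗_R R̂-modules, then I = J. -/
/-!
A module homomorphism `ψ : K → T` out of an idempotent two-sided ideal `K` lands in `K`, since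
`ψ (u * v) = u * ψ v` with `u ∈ K`. Hence two such ideals that are isomorphic as modules contain
each other. The extensions of `I` and `J` to `S ⊗_R R̂` are again idempotent and two-sided, so they
coincide, and they contract back to `I` and `J`: the kernel of `S ⊗ R̂ → (S ⧸ I) ⊗ R̂` contains the
extension of `I`, while `S ⧸ I → (S ⧸ I) ⊗ R̂` is injective because the finite `R`-module `S ⧸ I`
is `𝔪`-adically separated (Krull).
-/

universe u

open scoped TensorProduct Pointwise

namespace Ideal

variable {T : Type*} [Ring T]

theorem mul_eq_span_mul_set (I J : Ideal T) [I.IsTwoSided] :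
    I * J = Submodule.span T ((I : Set T) * (J : Set T)) := by
  have : (span (I : Set T)).IsTwoSided := by rwa [span_eq]
  simpa only [span_eq] using span_mul_span' (I : Set T) J

theorem apply_mem_of_mul_self_eq (K : Ideal T) [K.IsTwoSided] (hK : K * K = K)
    (ψ : K →ₗ[T] T) (x : K) : ψ x ∈ K := by
  obtain ⟨x, hx⟩ := x
  have hx' : x ∈ K * K := hK.symm ▸ hx
  induction hx' using Submodule.smul_induction_on' with
  | smul r hr n hn =>
    have : (⟨r • n, hx⟩ : K) = r • ⟨n, hn⟩ := rfl
    rw [this, map_smul, smul_eq_mul]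
    exact K.mul_mem_right _ hr
  | add a ha b hb iha ihb =>
    have : (⟨a + b, hx⟩ : K) = ⟨a, hK ▸ ha⟩ + ⟨b, hK ▸ hb⟩ := rfl
    rw [this, map_add]
    exact K.add_mem (iha _) (ihb _)

theorem eq_of_linearEquiv {K L : Ideal T} [K.IsTwoSided] [L.IsTwoSided] (hK : K * K = K)
    (hL : L * L = L) (e : K ≃ₗ[T] L) : K = L := by
  apply le_antisymm
  · intro x hx
    simpa using apply_mem_of_mul_self_eq L hL (K.subtype ∘ₗ e.symm.toLinearMap) (e ⟨x, hx⟩)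
  · intro y hy
    simpa using apply_mem_of_mul_self_eq K hK (L.subtype ∘ₗ e.toLinearMap) (e.symm ⟨y, hy⟩)

variable {S F : Type*} [Semiring S] [FunLike F T S] [RingHomClass F T S]

theorem map_mul_le (f : F) (I J : Ideal T) : map f (I * J) ≤ map f I * map f J :=
  map_le_iff_le_comap.2 <| mul_le.2 fun r hr s hs => by
    rw [mem_comap, map_mul]
    exact mul_mem_mul (mem_map_of_mem f hr) (mem_map_of_mem f hs)

theorem map_mul_self_eq (f : F) {I : Ideal T} (hI : I * I = I) :
    map f I * map f I = map f I :=
  le_antisymm mul_le_right <| calc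
    map f I = map f (I * I) := by rw [hI]
    _ ≤ map f I * map f I := map_mul_le f I I

end Ideal

theorem AdicCompletion.injective_tmul_one {R : Type*} [CommRing R] (𝔞 : Ideal R)
    {M : Type*} [AddCommGroup M] [Module R M] [IsHausdorff 𝔞 M] :
    Function.Injective fun x : M => x ⊗ₜ[R] (1 : AdicCompletion 𝔞 R) := by
  refine Function.Injective.of_comp (f := ofTensorProduct 𝔞 M ∘ TensorProduct.comm R M _) ?_
  convert of_injective 𝔞 M using 1
  ext x
  simp

open Algebra.TensorProduct

instance Ideal.isTwoSided_map_includeLeft {R S B : Type*} [CommRing R] [Ring S] [Algebra R S]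
    [Ring B] [Algebra R B] (I : Ideal S) [I.IsTwoSided] :
    (I.map (includeLeft : S →ₐ[R] S ⊗[R] B)).IsTwoSided := by
  set f : S →ₐ[R] S ⊗[R] B := includeLeft
  have hgen : ∀ y ∈ I, ∀ t : S ⊗[R] B, f y * t ∈ I.map f := by
    intro y hy t
    induction t using TensorProduct.induction_on with
    | zero => simp
    | tmul s b =>
      have : f y * (s ⊗ₜ b) = (1 ⊗ₜ b) * f (y * s) := by simp [f]
      rw [this]
      exact Ideal.mul_mem_left _ _ (Ideal.mem_map_of_mem f (I.mul_mem_right s hy))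
    | add t t' ht ht' => rw [mul_add]; exact Ideal.add_mem _ ht ht'
  suffices ∀ a ∈ I.map f, ∀ t, a * t ∈ I.map f from ⟨fun b ha => this _ ha b⟩
  intro a ha
  induction ha using Submodule.span_induction with
  | mem a ha => obtain ⟨y, hy, rfl⟩ := ha; exact hgen y hy
  | zero => simp
  | add a a' _ _ ha ha' => intro t; rw [add_mul]; exact Ideal.add_mem _ (ha t) (ha' t)
  | smul c a _ ha => intro t; rw [smul_eq_mul, mul_assoc]; exact Ideal.mul_mem_left _ _ (ha t)

theorem Ideal.comap_map_includeLeft_adicCompletion {R S : Type*} [CommRing R] (𝔞 : Ideal R)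
    [Ring S] [Algebra R S] (I : Ideal S) [I.IsTwoSided] [IsHausdorff 𝔞 (S ⧸ I)] :
    (I.map (includeLeft : S →ₐ[R] S ⊗[R] AdicCompletion 𝔞 R)).comap
      (includeLeft : S →ₐ[R] S ⊗[R] AdicCompletion 𝔞 R) = I := by
  refine le_antisymm (fun x hx => ?_) le_comap_map
  let g := Algebra.TensorProduct.map (Ideal.Quotient.mkₐ R I) (AlgHom.id R (AdicCompletion 𝔞 R))
  have hker : I.map (includeLeft : S →ₐ[R] S ⊗[R] AdicCompletion 𝔞 R) ≤ RingHom.ker g := by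
    rw [map_le_iff_le_comap]
    intro y hy
    simp [g, Ideal.Quotient.eq_zero_iff_mem.2 hy]
  have : Ideal.Quotient.mk I x ⊗ₜ[R] (1 : AdicCompletion 𝔞 R) = 0 ⊗ₜ 1 := by
    simpa [g] using hker hx
  simpa [Ideal.Quotient.eq_zero_iff_mem] using AdicCompletion.injective_tmul_one 𝔞 this

/-- For a module-finite algebra `S` over a local noetherian ring `R`, idempotent
two-sided ideals `I`, `J` of `S` whose extensions to `Ŝ = S ⊗_R R̂` are isomorphic as
`Ŝ`-modules are equal. -/
theorem stmt12 (R : Type u) [CommRing R] [IsLocalRing R] [IsNoetherianRing R]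
    (S : Type u) [Ring S] [Algebra R S] [Module.Finite R S]
    (I J : Ideal S)
    (hI2 : ∀ a ∈ I, ∀ s : S, a * s ∈ I) (hJ2 : ∀ a ∈ J, ∀ s : S, a * s ∈ J)
    (hIi : Submodule.span S ((I : Set S) * (I : Set S)) = I)
    (hJi : Submodule.span S ((J : Set S) * (J : Set S)) = J)
    (h : Nonempty
      (↥(Ideal.span ((Algebra.TensorProduct.includeLeft :
            S →ₐ[R] S ⊗[R] AdicCompletion (IsLocalRing.maximalIdeal R) R) '' (I : Set S)))
        ≃ₗ[S ⊗[R] AdicCompletion (IsLocalRing.maximalIdeal R) R]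
        ↥(Ideal.span ((Algebra.TensorProduct.includeLeft :
            S →ₐ[R] S ⊗[R] AdicCompletion (IsLocalRing.maximalIdeal R) R) '' (J : Set S))))) :
    I = J := by
  have : I.IsTwoSided := ⟨fun s ha => hI2 _ ha s⟩
  have : J.IsTwoSided := ⟨fun s ha => hJ2 _ ha s⟩
  let f : S →ₐ[R] S ⊗[R] AdicCompletion (IsLocalRing.maximalIdeal R) R := includeLeft
  obtain ⟨e⟩ := h
  have hext : I.map f = J.map f :=
    Ideal.eq_of_linearEquiv (Ideal.map_mul_self_eq f ((I.mul_eq_span_mul_set I).trans hIi))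
      (Ideal.map_mul_self_eq f ((J.mul_eq_span_mul_set J).trans hJi)) e
  rw [← Ideal.comap_map_includeLeft_adicCompletion (IsLocalRing.maximalIdeal R) I, hext,
    Ideal.comap_map_includeLeft_adicCompletion]
end

section
/- Let A be a full submonoid of ℕ₀^s (i.e., if a, a' ∈ A and a + c = a' with c ∈ ℕ₀^s then c ∈ A), and suppose A = A₁ ⊕ A₂ is a direct sum of nonzero submonoids A₁, A₂ (every a ∈ A is uniquely a₁ + a₂ with aᵢ ∈ Aᵢ). Then for any nonzero elements a₁ ∈ A₁ and a₂ ∈ A₂, the supports supp(a₁) and supp(a₂) (sets of indices with nonzero coordinate) are incomparable under inclusion. -/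
/-- The support of an element of `ℕ₀^s`. -/
def suppFn {s : ℕ} (x : Fin s → ℕ) : Set (Fin s) := {i | x i ≠ 0}

/-- If a full submonoid `A` of `ℕ₀^s` decomposes as a direct sum of nonzero submonoids
`A₁ ⊕ A₂`, then supports of nonzero elements of `A₁` and `A₂` are incomparable. -/
theorem stmt17 (s : ℕ) (A A₁ A₂ : AddSubmonoid (Fin s → ℕ))
    (hfull : ∀ a ∈ A, ∀ a' ∈ A, ∀ c : Fin s → ℕ, a + c = a' → c ∈ A)
    (h1 : A₁ ≤ A) (h2 : A₂ ≤ A) (h1ne : A₁ ≠ ⊥) (h2ne : A₂ ≠ ⊥)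
    (hds : ∀ a ∈ A, ∃! p : (Fin s → ℕ) × (Fin s → ℕ),
      p.1 ∈ A₁ ∧ p.2 ∈ A₂ ∧ a = p.1 + p.2) :
    ∀ a₁ ∈ A₁, a₁ ≠ 0 → ∀ a₂ ∈ A₂, a₂ ≠ 0 →
      ¬ suppFn a₁ ⊆ suppFn a₂ ∧ ¬ suppFn a₂ ⊆ suppFn a₁ := by
  intro a₁ ha₁ ha₁0 a₂ ha₂ ha₂0
  constructor
  · -- supp a₁ ⊆ supp a₂ leads to a₁ = 0
    intro hsub
    apply ha₁0
    set n : ℕ := Finset.univ.sup a₁ with hn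
    have hle : ∀ i, a₁ i ≤ n * a₂ i := by
      intro i
      by_cases h : a₁ i = 0
      · simp [h]
      · have h2i : a₂ i ≠ 0 := hsub h
        calc a₁ i ≤ n := Finset.le_sup (Finset.mem_univ i)
          _ = n * 1 := by ring
          _ ≤ n * a₂ i := Nat.mul_le_mul_left n (Nat.one_le_iff_ne_zero.2 h2i)
    set c : Fin s → ℕ := fun i => n * a₂ i - a₁ i with hc
    have heq : a₁ + c = n • a₂ := by
      funext i
      have := hle i
      simp only [hc, Pi.add_apply, Pi.smul_apply, smul_eq_mul]
      omega
    have hnA : (n • a₂ : Fin s → ℕ) ∈ A := AddSubmonoid.nsmul_mem A (h2 ha₂) n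
    have hcA : c ∈ A := hfull a₁ (h1 ha₁) _ hnA c heq
    obtain ⟨⟨c₁, c₂⟩, ⟨hc₁, hc₂, hcsum⟩, _⟩ := hds c hcA
    obtain ⟨p, _, huniq⟩ := hds (n • a₂) hnA
    have e1 : p = (a₁ + c₁, c₂) := by
      symm; apply huniq
      refine ⟨A₁.add_mem ha₁ hc₁, hc₂, ?_⟩
      rw [← heq, hcsum]; funext i; simp; ring
    have e2 : p = (0, n • a₂) := by
      symm; apply huniq
      exact ⟨A₁.zero_mem, AddSubmonoid.nsmul_mem A₂ ha₂ n, by simp⟩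
    have : a₁ + c₁ = 0 := by
      have := e1.symm.trans e2
      exact congrArg Prod.fst this
    funext i
    have := congrFun this i
    simp only [Pi.add_apply, Pi.zero_apply] at this
    simpa using Nat.eq_zero_of_add_eq_zero_right this
  · intro hsub
    apply ha₂0
    set n : ℕ := Finset.univ.sup a₂ with hn
    have hle : ∀ i, a₂ i ≤ n * a₁ i := by
      intro i
      by_cases h : a₂ i = 0
      · simp [h]
      · have h1i : a₁ i ≠ 0 := hsub h
        calc a₂ i ≤ n := Finset.le_sup (Finset.mem_univ i)
          _ = n * 1 := by ring
          _ ≤ n * a₁ i := Nat.mul_le_mul_left n (Nat.one_le_iff_ne_zero.2 h1i)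
    set c : Fin s → ℕ := fun i => n * a₁ i - a₂ i with hc
    have heq : a₂ + c = n • a₁ := by
      funext i
      have := hle i
      simp only [hc, Pi.add_apply, Pi.smul_apply, smul_eq_mul]
      omega
    have hnA : (n • a₁ : Fin s → ℕ) ∈ A := AddSubmonoid.nsmul_mem A (h1 ha₁) n
    have hcA : c ∈ A := hfull a₂ (h2 ha₂) _ hnA c heq
    obtain ⟨⟨c₁, c₂⟩, ⟨hc₁, hc₂, hcsum⟩, _⟩ := hds c hcA
    obtain ⟨p, _, huniq⟩ := hds (n • a₁) hnA
    have e1 : p = (c₁, a₂ + c₂) := by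
      symm; apply huniq
      refine ⟨hc₁, A₂.add_mem ha₂ hc₂, ?_⟩
      rw [← heq, hcsum]; funext i; simp; ring
    have e2 : p = (n • a₁, 0) := by
      symm; apply huniq
      exact ⟨AddSubmonoid.nsmul_mem A₁ ha₁ n, A₂.zero_mem, by simp⟩
    have : a₂ + c₂ = 0 := by
      have := e1.symm.trans e2
      exact congrArg Prod.snd this
    funext i
    have := congrFun this i
    simp only [Pi.add_apply, Pi.zero_apply] at this
    simpa using Nat.eq_zero_of_add_eq_zero_right this
end

section
/- Let A be a full submonoid of ℕ₀^s containing an order-unit, and suppose A = A₁ ⊕ A₂ with A₁, A₂ nonzero submonoids. Let I₁ = supp(A₁) \ supp(A₂) and let π₁ : ℕ₀^s → ℕ₀^{I₁} be the coordinate projection. Then the restriction of π₁ to A₁ is an injective divisor homomorphism; in particular π₁(A₁) is a full submonoid of ℕ₀^{I₁}. -/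
/-- If a full submonoid `A` of `ℕ₀^s` with an order-unit decomposes as a direct sum of
nonzero submonoids `A₁ ⊕ A₂`, and `I₁ = supp(A₁) \ supp(A₂)`, then the coordinate
projection `π₁ : ℕ₀^s → ℕ₀^{I₁}` restricted to `A₁` is an injective divisor
homomorphism; in particular `π₁(A₁)` is a full submonoid of `ℕ₀^{I₁}`. -/
theorem stmt18 (s : ℕ) (A A₁ A₂ : AddSubmonoid (Fin s → ℕ))
    (hfull : ∀ a ∈ A, ∀ a' ∈ A, ∀ c : Fin s → ℕ, a + c = a' → c ∈ A)
    (horder : ∃ u ∈ A, ∀ a ∈ A, ∃ n : ℕ, ∃ c ∈ A, a + c = n • u)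
    (h1 : A₁ ≤ A) (h2 : A₂ ≤ A) (h1ne : A₁ ≠ ⊥) (h2ne : A₂ ≠ ⊥)
    (hds : ∀ a ∈ A, ∃! p : (Fin s → ℕ) × (Fin s → ℕ),
      p.1 ∈ A₁ ∧ p.2 ∈ A₂ ∧ a = p.1 + p.2) :
    let I₁ : Set (Fin s) := {i | ∃ a ∈ A₁, a i ≠ 0} \ {i | ∃ a ∈ A₂, a i ≠ 0}
    let π₁ : (Fin s → ℕ) → (I₁ → ℕ) := fun x i => x i.1
    (∀ a ∈ A₁, ∀ b ∈ A₁, π₁ a = π₁ b → a = b) ∧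
      (∀ a ∈ A₁, ∀ b ∈ A₁, (∃ y : I₁ → ℕ, π₁ a + y = π₁ b) → ∃ c ∈ A₁, a + c = b) ∧
      (∀ a ∈ A₁, ∀ b ∈ A₁, ∀ y : I₁ → ℕ, π₁ a + y = π₁ b →
        ∃ c ∈ A₁, π₁ c = y) := by
  intro I₁ π₁
  obtain ⟨u, huA, hu⟩ := horder
  obtain ⟨⟨u₁, u₂⟩, ⟨hu₁, hu₂, husum⟩, -⟩ := hds u huA
  -- uniqueness of decompositions
  have uniq : ∀ x₁ ∈ A₁, ∀ x₂ ∈ A₂, ∀ y₁ ∈ A₁, ∀ y₂ ∈ A₂,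
      x₁ + x₂ = y₁ + y₂ → x₁ = y₁ ∧ x₂ = y₂ := by
    intro x₁ hx₁ x₂ hx₂ y₁ hy₁ y₂ hy₂ heq
    obtain ⟨p, -, hup⟩ := hds (x₁ + x₂) (A.add_mem (h1 hx₁) (h2 hx₂))
    have e1 := hup (x₁, x₂) ⟨hx₁, hx₂, rfl⟩
    have e2 := hup (y₁, y₂) ⟨hy₁, hy₂, heq⟩
    have e := e1.trans e2.symm
    exact ⟨congrArg Prod.fst e, congrArg Prod.snd e⟩
  -- the support of A₂ is contained in the support of u₂
  have hsupp2 : ∀ i : Fin s, (∃ x ∈ A₂, x i ≠ 0) → u₂ i ≠ 0 := by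
    rintro i ⟨x, hx, hxi⟩
    obtain ⟨n, c, hcA, hxc⟩ := hu x (h2 hx)
    obtain ⟨⟨c₁, c₂⟩, ⟨hc₁, hc₂, hcsum⟩, -⟩ := hds c hcA
    have heq : c₁ + (x + c₂) = n • u₁ + n • u₂ := by
      have h' : x + (c₁ + c₂) = n • (u₁ + u₂) := by
        rw [← hcsum, ← husum]; exact hxc
      rw [smul_add] at h'
      rw [← h']; abel
    have hxe := (uniq c₁ hc₁ (x + c₂) (A₂.add_mem hx hc₂) (n • u₁)
      (A₁.nsmul_mem hu₁ n) (n • u₂) (A₂.nsmul_mem hu₂ n) heq).2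
    have h' : x i + c₂ i = n * u₂ i := by
      have := congrFun hxe i
      simpa [Pi.smul_apply, smul_eq_mul] using this
    intro h0
    rw [h0] at h'
    omega
  -- key: the divisor homomorphism property
  have key : ∀ a ∈ A₁, ∀ b ∈ A₁, (∀ i : I₁, a i.1 ≤ b i.1) → ∃ c ∈ A₁, a + c = b := by
    intro a ha b hb hle
    set n := Finset.univ.sup a with hn
    have hple : ∀ i : Fin s, a i ≤ b i + n * u₂ i := by
      intro i
      by_cases h2i : ∃ x ∈ A₂, x i ≠ 0
      · have hu2i := hsupp2 i h2i
        have han : a i ≤ n := Finset.le_sup (Finset.mem_univ i)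
        have : n ≤ n * u₂ i := Nat.le_mul_of_pos_right n (Nat.pos_of_ne_zero hu2i)
        omega
      · by_cases hai : a i = 0
        · omega
        · have hiI : i ∈ I₁ := ⟨⟨a, ha, hai⟩, h2i⟩
          have hab : a i ≤ b i := hle ⟨i, hiI⟩
          omega
    have hsum : a + (fun i => b i + n * u₂ i - a i) = b + n • u₂ := by
      funext i
      have h' : (b + n • u₂) i = b i + n * u₂ i := by
        simp [Pi.smul_apply, smul_eq_mul]
      rw [h']
      have := hple i
      show a i + (b i + n * u₂ i - a i) = b i + n * u₂ i
      omega
    have hmem : (fun i => b i + n * u₂ i - a i) ∈ A :=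
      hfull a (h1 ha) (b + n • u₂)
        (A.add_mem (h1 hb) (h2 (A₂.nsmul_mem hu₂ n))) _ hsum
    obtain ⟨⟨c₁, c₂⟩, ⟨hc₁, hc₂, hcsum⟩, -⟩ := hds _ hmem
    have heq : (a + c₁) + c₂ = b + n • u₂ := by
      rw [← hsum, hcsum]; abel
    have := (uniq (a + c₁) (A₁.add_mem ha hc₁) c₂ hc₂ b hb (n • u₂)
      (A₂.nsmul_mem hu₂ n) heq).1
    exact ⟨c₁, hc₁, this⟩
  refine ⟨?_, ?_, ?_⟩
  · intro a ha b hb h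
    obtain ⟨c, hc, hac⟩ := key a ha b hb (fun i => (congrFun h i).le)
    obtain ⟨c', hc', hbc⟩ := key b hb a ha (fun i => (congrFun h i).ge)
    funext i
    have e1 : a i + c i = b i := congrFun hac i
    have e2 : b i + c' i = a i := congrFun hbc i
    omega
  · rintro a ha b hb ⟨y, hy⟩
    refine key a ha b hb (fun i => ?_)
    have h' : a i.1 + y i = b i.1 := congrFun hy i
    omega
  · intro a ha b hb y hy
    obtain ⟨c, hc, hac⟩ := key a ha b hb (fun i => by
      have h' : a i.1 + y i = b i.1 := congrFun hy i
      omega)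
    refine ⟨c, hc, funext fun i => ?_⟩
    have e1 : a i.1 + c i.1 = b i.1 := congrFun hac i.1
    have e2 : a i.1 + y i = b i.1 := congrFun hy i
    show c i.1 = y i
    omega
end

section
/- Let S be a ring with Jacobson radical J(S), let P be a finitely generated projective right S-module and Q any projective right S-module. If Q/QJ(S) ≅ X ⊕ P/PJ(S) for some S/J(S)-module X, then there exists a projective right S-module Q' with Q'/Q'J(S) ≅ X and Q ≅ Q' ⊕ P. -/
universe u

/-- The submodule `J(S)·M` of an `S`-module `M`, where `J(S)` is the Jacobson radical. -/
def jacSmul (S : Type u) [Ring S] (M : Type u) [AddCommGroup M] [Module S M] :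
    Submodule S M :=
  Submodule.span S {x : M | ∃ j ∈ (⊥ : Ideal S).jacobson, ∃ m : M, x = j • m}

/-!
Lift the second component `Q → Q/QJ → P/PJ` of the given isomorphism to `g : Q → P`.
Since `P` is finitely generated, Nakayama's lemma makes `g` surjective, and since `P` is
projective, `g` splits: `Q ≅ ker g × P`, so `ker g` is projective. Reducing this splitting
modulo `J` gives `Q/QJ ≅ (ker g)/(ker g)J × P/PJ` with the same second component as the given
isomorphism `Q/QJ ≅ X × P/PJ`, and two such decompositions have isomorphic first factors.
-/

open LinearMap Submodule

namespace Submodule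

variable {R : Type*} [Ring R] {M N : Type*} [AddCommGroup M] [Module R M]
  [AddCommGroup N] [Module R N]

def prodQuotientEquiv (p : Submodule R M) (q : Submodule R N) :
    ((M × N) ⧸ p.prod q) ≃ₗ[R] (M ⧸ p) × (N ⧸ q) :=
  LinearEquiv.ofLinearMap
    ((p.prod q).liftQ (p.mkQ.prodMap q.mkQ) (by rw [ker_prodMap, ker_mkQ, ker_mkQ]))
    (coprod (p.mapQ _ (inl R M N) fun x hx => by simpa using hx)
      (q.mapQ _ (inr R M N) fun x hx => by simpa using hx))
    (by ext <;> simp) (by ext <;> simp)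

end Submodule

section jacSmul

variable {S : Type u} [Ring S] {M N : Type u} [AddCommGroup M] [Module S M]
  [AddCommGroup N] [Module S N]

theorem jacSmul_eq_jacobson_smul_top : jacSmul S M = Ring.jacobson S • (⊤ : Submodule S M) := by
  refine le_antisymm (span_le.mpr ?_) (smul_le.mpr fun r hr m _ => subset_span ⟨r, ?_, m, rfl⟩)
  · rintro - ⟨j, hj, m, rfl⟩
    exact smul_mem_smul (Ideal.jacobson_bot (R := S) ▸ hj) mem_top
  · rwa [Ideal.jacobson_bot]

theorem map_jacSmul_le (f : M →ₗ[S] N) : (jacSmul S M).map f ≤ jacSmul S N := by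
  rw [jacSmul_eq_jacobson_smul_top, jacSmul_eq_jacobson_smul_top, map_smul'']
  exact smul_mono_right _ le_top

theorem map_jacSmul_of_surjective (f : M →ₗ[S] N) (hf : Function.Surjective f) :
    (jacSmul S M).map f = jacSmul S N := by
  rw [jacSmul_eq_jacobson_smul_top, jacSmul_eq_jacobson_smul_top, map_smul'', Submodule.map_top,
    range_eq_top.mpr hf]

theorem jacSmul_prod : jacSmul S (M × N) = (jacSmul S M).prod (jacSmul S N) :=
  le_antisymm ((le_prod_iff ..).mpr ⟨map_jacSmul_le _, map_jacSmul_le _⟩)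
    ((prod_le_iff ..).mpr ⟨map_jacSmul_le _, map_jacSmul_le _⟩)

theorem eq_top_of_sup_jacSmul_eq_top [Module.Finite S M] {p : Submodule S M}
    (h : p ⊔ jacSmul S M = ⊤) : p = ⊤ := by
  have hfg : (⊤ : Submodule S (M ⧸ p)).FG := Module.Finite.fg_top
  rw [← Submodule.Quotient.subsingleton_iff, ← Submodule.subsingleton_iff S,
    ← subsingleton_iff_bot_eq_top]
  refine (hfg.eq_bot_of_le_jacobson_smul ?_).symm
  -- the image of `p ⊔ J·M = M` in `M ⧸ p` is `J·(M ⧸ p)`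
  rw [← jacSmul_eq_jacobson_smul_top, ← map_jacSmul_of_surjective _ p.mkQ_surjective,
    ← range_mkQ p, range_eq_map, ← h, Submodule.map_sup, mkQ_map_self, bot_sup_eq]

theorem surjective_of_surjective_mkQ_comp [Module.Finite S N] (g : M →ₗ[S] N)
    (hg : Function.Surjective ((jacSmul S N).mkQ ∘ₗ g)) : Function.Surjective g := by
  rw [← range_eq_top]
  refine eq_top_of_sup_jacSmul_eq_top (eq_top_iff.mpr fun n _ => ?_)
  obtain ⟨m, hm⟩ := hg ((jacSmul S N).mkQ n)
  rw [comp_apply, mkQ_apply, mkQ_apply, Submodule.Quotient.eq] at hm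
  simpa using add_mem_sup (mem_range_self g m) (neg_mem hm)

def jacSmulQuotEquiv (e : M ≃ₗ[S] N) : (M ⧸ jacSmul S M) ≃ₗ[S] N ⧸ jacSmul S N :=
  Quotient.equiv _ _ e (map_jacSmul_of_surjective (e : M →ₗ[S] N) e.surjective)

def jacSmulQuotProdEquiv :
    ((M × N) ⧸ jacSmul S (M × N)) ≃ₗ[S] (M ⧸ jacSmul S M) × (N ⧸ jacSmul S N) :=
  (quotEquivOfEq _ _ jacSmul_prod).trans (prodQuotientEquiv _ _)

@[simp]
theorem jacSmulQuotEquiv_mk (e : M ≃ₗ[S] N) (x : M) :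
    jacSmulQuotEquiv e (Submodule.Quotient.mk x) = Submodule.Quotient.mk (e x) :=
  rfl

@[simp]
theorem jacSmulQuotProdEquiv_mk (x : M × N) :
    jacSmulQuotProdEquiv (Submodule.Quotient.mk x : (M × N) ⧸ jacSmul S (M × N)) =
      (Submodule.Quotient.mk x.1, Submodule.Quotient.mk x.2) :=
  rfl

end jacSmul

theorem Module.Projective.of_prod_left {R M N : Type*} [Semiring R] [AddCommMonoid M]
    [Module R M] [AddCommMonoid N] [Module R N] [Module.Projective R (M × N)] :
    Module.Projective R M :=
  .of_split (inl R M N) (fst R M N) (fst_comp_inl R M N)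

namespace LinearEquiv

variable {R A B C X : Type*} [Semiring R] [AddCommMonoid A] [Module R A] [AddCommMonoid B]
  [Module R B] [AddCommMonoid C] [Module R C] [AddCommMonoid X] [Module R X]

theorem symm_fst_apply_symm_eq_of_snd_comp_eq {ψ : A ≃ₗ[R] B × C} {φ : A ≃ₗ[R] X × C}
    (h : snd R B C ∘ₗ ψ.toLinearMap = snd R X C ∘ₗ φ.toLinearMap) (b : B) :
    φ.symm ((φ (ψ.symm (b, 0))).1, 0) = ψ.symm (b, 0) := by
  rw [symm_apply_eq]
  refine Prod.ext rfl ?_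
  simpa using congr($h (ψ.symm (b, 0)))

def fstEquivOfSndEq (ψ : A ≃ₗ[R] B × C) (φ : A ≃ₗ[R] X × C)
    (h : snd R B C ∘ₗ ψ.toLinearMap = snd R X C ∘ₗ φ.toLinearMap) : B ≃ₗ[R] X :=
  ofLinearMap (fst R X C ∘ₗ φ.toLinearMap ∘ₗ ψ.symm.toLinearMap ∘ₗ inl R B C)
    (fst R B C ∘ₗ ψ.toLinearMap ∘ₗ φ.symm.toLinearMap ∘ₗ inl R X C)
    (by ext x; simp [symm_fst_apply_symm_eq_of_snd_comp_eq h.symm])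
    (by ext b; simp [symm_fst_apply_symm_eq_of_snd_comp_eq h])

end LinearEquiv

theorem stmt19_general (S : Type u) [Ring S]
    (P : Type u) [AddCommGroup P] [Module S P] [Module.Finite S P] [Module.Projective S P]
    (Q : Type u) [AddCommGroup Q] [Module S Q] [Module.Projective S Q]
    (X : Type u) [AddCommGroup X] [Module S X]
    (h : Nonempty ((Q ⧸ jacSmul S Q) ≃ₗ[S] (X × (P ⧸ jacSmul S P)))) :
    ∃ Q' : Submodule S Q, Module.Projective S ↥Q' ∧
      Nonempty ((↥Q' ⧸ jacSmul S ↥Q') ≃ₗ[S] X) ∧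
      Nonempty (Q ≃ₗ[S] (↥Q' × P)) := by
  obtain ⟨φ⟩ := h
  obtain ⟨g, hg⟩ := Module.projective_lifting_property (jacSmul S P).mkQ
    (snd S X _ ∘ₗ φ.toLinearMap ∘ₗ (jacSmul S Q).mkQ) (jacSmul S P).mkQ_surjective
  have hg_surj : Function.Surjective g := surjective_of_surjective_mkQ_comp g <| by
    rw [hg]; exact Prod.snd_surjective.comp (φ.surjective.comp (mkQ_surjective _))
  obtain ⟨s, hs⟩ := g.exists_rightInverse_of_surjective (range_eq_top.mpr hg_surj)
  obtain ⟨e, -, he⟩ :=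
    (exact_subtype_ker_map g).splitSurjectiveEquiv (ker g).injective_subtype ⟨s, hs⟩
  have : Module.Projective S (ker g × P) := .of_equiv e
  refine ⟨ker g, .of_prod_left (N := P),
    ⟨(jacSmulQuotEquiv e ≪≫ₗ jacSmulQuotProdEquiv).fstEquivOfSndEq φ ?_⟩, ⟨e⟩⟩
  refine linearMap_qext _ (LinearMap.ext fun q => ?_)
  simpa [he] using congr($hg q)

/-- If `P` is finitely generated projective, `Q` is projective, and
`Q/QJ(S) ≅ X ⊕ P/PJ(S)` for some module `X` annihilated by `J(S)`, then there is a
projective module `Q'` with `Q'/Q'J(S) ≅ X` and `Q ≅ Q' ⊕ P`. -/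
theorem stmt19 (S : Type u) [Ring S]
    (P : Type u) [AddCommGroup P] [Module S P] [Module.Finite S P] [Module.Projective S P]
    (Q : Type u) [AddCommGroup Q] [Module S Q] [Module.Projective S Q]
    (X : Type u) [AddCommGroup X] [Module S X]
    (hX : ∀ j ∈ (⊥ : Ideal S).jacobson, ∀ x : X, j • x = 0)
    (h : Nonempty ((Q ⧸ jacSmul S Q) ≃ₗ[S] (X × (P ⧸ jacSmul S P)))) :
    ∃ Q' : Submodule S Q, Module.Projective S ↥Q' ∧
      Nonempty ((↥Q' ⧸ jacSmul S ↥Q') ≃ₗ[S] X) ∧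
      Nonempty (Q ≃ₗ[S] (↥Q' × P)) :=
  stmt19_general S P Q X h
end
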